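/- arXiv:1707.06905 — 2 statements merged into one kernel-verified Lean document; each statement's English description precedes it below -/
import Mathlib

section
/- For the elephant random walk with p < 3/4, E[X_n^2] ~ n/(3-4p) as n → ∞. -/
open MeasureTheory ProbabilityTheory Filter

/-- `a_n` coefficients of the ERW: `a_1 = 1` and
`a_n = Γ(n + 2p - 1)/(Γ(n) Γ(2p))` for `n ≥ 2`. -/
noncomputable def aERW (p : ℝ) (n : ℕ) : ℝ :=
  if n ≤ 1 then 1 else Real.Gamma ((n : ℝ) + (2 * p - 1)) / (Real.Gamma n * Real.Gamma (2 * p))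

/-- `s_n^2 = q(1-q) + ∑_{j=2}^n a_j^{-2}`. -/
noncomputable def sSqERW (p q : ℝ) (n : ℕ) : ℝ :=
  q * (1 - q) + ∑ j ∈ Finset.Icc 2 n, ((aERW p j)⁻¹) ^ 2

/-- The elephant random walk: a sequence of ±1 increments `η n` (for `n ≥ 1`; we set `η 0 = 0`)
on a probability space, with first step `+1` with probability `q`, and conditional law of
`η_{n+1}` given `η_1, …, η_n` equal to `(1/(2n)) ∑_{k=1}^n (1 + (2p-1) η_k η)`. -/
structure IsERW {Ω : Type*} [MeasurableSpace Ω] (μ : Measure Ω)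
    (p q : ℝ) (η : ℕ → Ω → ℝ) : Prop where
  isProb : IsProbabilityMeasure μ
  p_mem : p ∈ Set.Ioo (0 : ℝ) 1
  q_mem : q ∈ Set.Ioo (0 : ℝ) 1
  meas : ∀ n, Measurable (η n)
  zero : ∀ ω, η 0 ω = 0
  pm_one : ∀ n, 1 ≤ n → ∀ ω, η n ω = 1 ∨ η n ω = -1
  first : μ {ω | η 1 ω = 1} = ENNReal.ofReal q
  cond : ∀ n, 1 ≤ n → ∀ e : ℝ, (e = 1 ∨ e = -1) →
    (μ[Set.indicator {ω | η (n + 1) ω = e} (fun _ => (1 : ℝ)) |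
        MeasurableSpace.comap (fun ω (k : Finset.Icc 1 n) => η k ω) inferInstance])
      =ᵐ[μ] fun ω => (1 / (2 * (n : ℝ))) * ∑ k ∈ Finset.Icc 1 n, (1 + (2 * p - 1) * η k ω * e)

/-- Position of the ERW at time `n`. -/
noncomputable def erwX {Ω : Type*} (η : ℕ → Ω → ℝ) (n : ℕ) (ω : Ω) : ℝ :=
  ∑ k ∈ Finset.Icc 1 n, η k ω

/-- A standard one-dimensional Brownian motion. -/
structure IsStdBM {Ω : Type*} [MeasurableSpace Ω] (μ : Measure Ω) (W : ℝ → Ω → ℝ) : Prop where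
  isProb : IsProbabilityMeasure μ
  meas : ∀ t, Measurable (W t)
  init : ∀ᵐ ω ∂μ, W 0 ω = 0
  indep_incr : ∀ (n : ℕ) (t : ℕ → ℝ), Monotone t → 0 ≤ t 0 →
    iIndepFun
      (fun i : Fin n => fun ω => W (t (i + 1)) ω - W (t i) ω) μ
  gauss_incr : ∀ s t : ℝ, 0 ≤ s → s ≤ t →
    Measure.map (fun ω => W t ω - W s ω) μ = gaussianReal 0 (Real.toNNReal (t - s))
  cont : ∀ᵐ ω ∂μ, Continuous fun t => W t ω

/-! Conditioning on the past, `E[η_{n+1} | η_1, …, η_n] = (2p - 1) X_n / n`, and `η_{n+1}² = 1`,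
so `m_n = E[X_n²]` obeys `m_{n+1} = (1 + (4p - 2)/n) m_n + 1`. Then `u_n = m_n / n - 1/(3 - 4p)`
obeys `u_{n+1} = (1 - (3 - 4p)/(n + 1)) u_n`, and since `1 - x ≤ e^{-x}` and the harmonic series
diverges, `u_n → 0` as soon as `3 - 4p > 0`. -/

open Real Topology

theorem tendsto_zero_of_abs_succ_le_one_sub_div {u : ℕ → ℝ} {a : ℝ} (ha : 0 < a)
    (h : ∀ᶠ n : ℕ in atTop, |u (n + 1)| ≤ (1 - a / (n + 1)) * |u n|) :
    Tendsto u atTop (𝓝 0) := by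
  set H : ℕ → ℝ := fun n => ∑ k ∈ Finset.range n, 1 / ((k : ℝ) + 1)
  obtain ⟨N, hN⟩ := eventually_atTop.1 h
  have hdecr : ∀ n ≥ N, |u n| * exp (a * H n) ≤ |u N| * exp (a * H N) := by
    intro n hn
    induction n, hn using Nat.le_induction with
    | base => rfl
    | succ n hn ih =>
      calc |u (n + 1)| * exp (a * H (n + 1))
          ≤ (1 - a / (n + 1)) * |u n| * exp (a * H (n + 1)) := by gcongr; exact hN n hn
        _ ≤ exp (-(a / (n + 1))) * |u n| * exp (a * H (n + 1)) := by
          gcongr; linarith [add_one_le_exp (-(a / (n + 1)))]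
        _ = |u n| * exp (a * H n) := by
          simp only [H, Finset.sum_range_succ]
          rw [mul_right_comm, ← exp_add]
          ring_nf
        _ ≤ |u N| * exp (a * H N) := ih
  have hexp : Tendsto (fun n => exp (-(a * H n))) atTop (𝓝 0) :=
    tendsto_exp_neg_atTop_nhds_zero.comp
      (tendsto_sum_range_one_div_nat_succ_atTop.const_mul_atTop ha)
  refine squeeze_zero_norm' ?_ (by simpa using hexp.const_mul (|u N| * exp (a * H N)))
  filter_upwards [eventually_ge_atTop N] with n hn
  calc ‖u n‖ = |u n| * exp (a * H n) * exp (-(a * H n)) := by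
        rw [mul_assoc, ← exp_add, add_neg_cancel, exp_zero, mul_one, norm_eq_abs]
    _ ≤ |u N| * exp (a * H N) * exp (-(a * H n)) :=
        mul_le_mul_of_nonneg_right (hdecr n hn) (exp_pos _).le

theorem tendsto_div_self_of_succ_eq {m : ℕ → ℝ} {r : ℝ} (hr : r < 1)
    (h : ∀ᶠ n : ℕ in atTop, m (n + 1) = (1 + r / n) * m n + 1) :
    Tendsto (fun n : ℕ => m n / n) atTop (𝓝 (1 / (1 - r))) := by
  set u : ℕ → ℝ := fun n => m n / n - 1 / (1 - r) with hu_def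
  have hu : Tendsto u atTop (𝓝 0) := by
    refine tendsto_zero_of_abs_succ_le_one_sub_div (a := 1 - r) (by linarith) ?_
    filter_upwards [h, eventually_gt_atTop 0, eventually_ge_atTop ⌈-r⌉₊] with n hrec hn hceil
    have hnr : -r ≤ n := Nat.ceil_le.1 hceil
    have hr' : 1 - r ≠ 0 := by linarith
    have hstep : u (n + 1) = (1 - (1 - r) / (n + 1)) * u n := by
      simp only [hu_def]
      push_cast
      rw [hrec]
      field_simp
      ring
    rw [hstep, abs_mul, abs_of_nonneg]
    rw [sub_nonneg, div_le_one (by positivity)]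
    linarith
  simpa [hu_def] using hu.add_const (1 / (1 - r))

abbrev erwHistory {Ω : Type*} (η : ℕ → Ω → ℝ) (n : ℕ) : MeasurableSpace Ω :=
  MeasurableSpace.comap (fun ω (k : Finset.Icc 1 n) => η k ω) inferInstance

theorem measurable_erwX_erwHistory {Ω : Type*} (η : ℕ → Ω → ℝ) (n : ℕ) :
    Measurable[erwHistory η n] (erwX η n) :=
  Finset.measurable_sum _ fun k hk =>
    (measurable_pi_apply (⟨k, hk⟩ : Finset.Icc 1 n)).comp
      (comap_measurable (fun ω (k : Finset.Icc 1 n) => η k ω))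

namespace IsERW

variable {Ω : Type*} [MeasurableSpace Ω] {μ : Measure Ω} {p q : ℝ} {η : ℕ → Ω → ℝ}

theorem erwHistory_le (h : IsERW μ p q η) (n : ℕ) : erwHistory η n ≤ ‹MeasurableSpace Ω› :=
  Measurable.comap_le <|
    measurable_pi_lambda (fun ω (k : Finset.Icc 1 n) => η k ω) fun k => h.meas k

theorem sq_eta (h : IsERW μ p q η) {n : ℕ} (hn : 1 ≤ n) (ω : Ω) : η n ω ^ 2 = 1 := by
  rcases h.pm_one n hn ω with e | e <;> simp [e]

theorem abs_eta_le (h : IsERW μ p q η) (n : ℕ) (ω : Ω) : |η n ω| ≤ 1 := by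
  rcases Nat.eq_zero_or_pos n with rfl | hn
  · simp [h.zero]
  · rcases h.pm_one n hn ω with e | e <;> simp [e]

theorem abs_erwX_le (h : IsERW μ p q η) (n : ℕ) (ω : Ω) : |erwX η n ω| ≤ n :=
  calc |erwX η n ω| ≤ ∑ k ∈ Finset.Icc 1 n, |η k ω| := Finset.abs_sum_le_sum_abs _ _
    _ ≤ ∑ k ∈ Finset.Icc 1 n, (1 : ℝ) := Finset.sum_le_sum fun k _ => h.abs_eta_le k ω
    _ = n := by simp

theorem measurable_erwX (h : IsERW μ p q η) (n : ℕ) : Measurable (erwX η n) :=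
  Finset.measurable_sum _ fun k _ => h.meas k

theorem eta_eq_indicator_sub (h : IsERW μ p q η) {n : ℕ} (hn : 1 ≤ n) :
    η n = {ω | η n ω = 1}.indicator (fun _ => (1 : ℝ)) -
      {ω | η n ω = -1}.indicator (fun _ => (1 : ℝ)) := by
  funext ω
  rcases h.pm_one n hn ω with e | e <;> norm_num [Set.indicator_apply, e]

theorem condExp_eta_succ (h : IsERW μ p q η) {n : ℕ} (hn : 1 ≤ n) :
    μ[η (n + 1) | erwHistory η n] =ᵐ[μ] fun ω => (2 * p - 1) / n * erwX η n ω := by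
  have := h.isProb
  have hind : ∀ e : ℝ, Integrable ({ω | η (n + 1) ω = e}.indicator fun _ => (1 : ℝ)) μ :=
    fun e => (integrable_const 1).indicator (measurableSet_eq_fun (h.meas _) measurable_const)
  rw [h.eta_eq_indicator_sub (by omega : 1 ≤ n + 1)]
  filter_upwards [condExp_sub (hind 1) (hind (-1)) (erwHistory η n),
    h.cond n hn 1 (Or.inl rfl), h.cond n hn (-1) (Or.inr rfl)] with ω hsub hplus hminus
  rw [hsub, Pi.sub_apply, hplus, hminus, ← mul_sub, ← Finset.sum_sub_distrib, erwX,
    Finset.mul_sum, Finset.mul_sum]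
  refine Finset.sum_congr rfl fun k _ => ?_
  have : (n : ℝ) ≠ 0 := by positivity
  field_simp
  ring

theorem integrable_eta (h : IsERW μ p q η) (n : ℕ) : Integrable (η n) μ :=
  have := h.isProb
  .of_bound (h.meas n).aestronglyMeasurable 1 (.of_forall (h.abs_eta_le n))

theorem integrable_erwX_sq (h : IsERW μ p q η) (n : ℕ) :
    Integrable (fun ω => erwX η n ω ^ 2) μ :=
  have := h.isProb
  .of_bound ((h.measurable_erwX n).pow_const 2).aestronglyMeasurable (n ^ 2) <| .of_forall
    fun ω => by
      rw [norm_pow, norm_eq_abs]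
      exact pow_le_pow_left₀ (abs_nonneg _) (h.abs_erwX_le n ω) 2

theorem integrable_erwX_mul_eta (h : IsERW μ p q η) (n m : ℕ) :
    Integrable (fun ω => erwX η n ω * η m ω) μ :=
  have := h.isProb
  .of_bound ((h.measurable_erwX n).mul (h.meas m)).aestronglyMeasurable (n * 1) <| .of_forall
    fun ω => by
      rw [norm_mul, norm_eq_abs, norm_eq_abs]
      exact mul_le_mul (h.abs_erwX_le n ω) (h.abs_eta_le m ω) (abs_nonneg _) n.cast_nonneg

theorem integral_erwX_mul_eta_succ (h : IsERW μ p q η) {n : ℕ} (hn : 1 ≤ n) :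
    ∫ ω, erwX η n ω * η (n + 1) ω ∂μ = (2 * p - 1) / n * ∫ ω, erwX η n ω ^ 2 ∂μ := by
  have := h.isProb
  calc ∫ ω, erwX η n ω * η (n + 1) ω ∂μ
      = ∫ ω, (μ[erwX η n * η (n + 1) | erwHistory η n]) ω ∂μ :=
        (integral_condExp (h.erwHistory_le n)).symm
    _ = ∫ ω, erwX η n ω * (μ[η (n + 1) | erwHistory η n]) ω ∂μ :=
        integral_congr_ae <| condExp_mul_of_stronglyMeasurable_left
          (measurable_erwX_erwHistory η n).stronglyMeasurable (h.integrable_erwX_mul_eta n _)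
          (h.integrable_eta _)
    _ = ∫ ω, (2 * p - 1) / n * erwX η n ω ^ 2 ∂μ := by
        refine integral_congr_ae ?_
        filter_upwards [h.condExp_eta_succ hn] with ω hω
        rw [hω]
        ring
    _ = (2 * p - 1) / n * ∫ ω, erwX η n ω ^ 2 ∂μ := integral_const_mul _ _

theorem integral_erwX_succ_sq (h : IsERW μ p q η) {n : ℕ} (hn : 1 ≤ n) :
    ∫ ω, erwX η (n + 1) ω ^ 2 ∂μ
      = (1 + 2 * (2 * p - 1) / n) * ∫ ω, erwX η n ω ^ 2 ∂μ + 1 := by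
  have := h.isProb
  have hX2 := h.integrable_erwX_sq n
  have hXη : Integrable (fun ω => 2 * (erwX η n ω * η (n + 1) ω)) μ :=
    (h.integrable_erwX_mul_eta n _).const_mul 2
  have hexpand : ∀ ω, erwX η (n + 1) ω ^ 2
      = erwX η n ω ^ 2 + 2 * (erwX η n ω * η (n + 1) ω) + 1 := fun ω => by
    have : erwX η (n + 1) ω = erwX η n ω + η (n + 1) ω := Finset.sum_Icc_succ_top (by omega) _
    rw [this, add_sq, h.sq_eta (by omega)]
    ring
  simp only [hexpand]
  rw [integral_add (hX2.add hXη : Integrable (fun ω => _ + _) μ) (integrable_const 1),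
    integral_add hX2 hXη, integral_const_mul, h.integral_erwX_mul_eta_succ hn]
  simp only [integral_const, probReal_univ, smul_eq_mul, mul_one, add_left_inj]
  ring

end IsERW

/-- diffusive regime, `E[X_n^2] ~ n/(3-4p)` for `p < 3/4`. -/
theorem erw_second_moment_diffusive {Ω : Type*} [MeasurableSpace Ω] {μ : Measure Ω}
    {p q : ℝ} {η : ℕ → Ω → ℝ} (h : IsERW μ p q η) (hp : p < 3 / 4) :
    Tendsto (fun n : ℕ => (∫ ω, (erwX η n ω) ^ 2 ∂μ) / ((n : ℝ) / (3 - 4 * p)))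
      atTop (nhds 1) := by
  have hrec : ∀ᶠ n : ℕ in atTop, ∫ ω, erwX η (n + 1) ω ^ 2 ∂μ
      = (1 + 2 * (2 * p - 1) / n) * ∫ ω, erwX η n ω ^ 2 ∂μ + 1 := by
    filter_upwards [eventually_ge_atTop 1] with n hn using h.integral_erwX_succ_sq hn
  have hlim := (tendsto_div_self_of_succ_eq (m := fun n => ∫ ω, erwX η n ω ^ 2 ∂μ)
    (r := 2 * (2 * p - 1)) (by linarith) hrec).const_mul (3 - 4 * p)
  rw [show 1 - 2 * (2 * p - 1) = 3 - 4 * p by ring, mul_one_div_cancel (by linarith)] at hlim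
  refine hlim.congr fun n => ?_
  rw [div_div_eq_mul_div]
  ring
end

section
/- For p ≤ 3/4, the series Σ_{j=1}^∞ 1/(a_j^4 s_j^4) converges, where a_j = Γ(j + 2p - 1)/(Γ(j)Γ(2p)) and s_j^2 = q(1-q) + Σ_{i=2}^j a_i^{-2}. -/
open MeasureTheory ProbabilityTheory Filter

/-!
The coefficients satisfy `n a_{n+1} = (n + 2p - 1) a_n`, so `n ↦ (n - 1) a_n` is nondecreasing.
Hence `a_i⁻¹ ≥ (i - 1) / ((j - 1) a_j)` for `2 ≤ i ≤ j`, and summing the squares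
gives `a_j² s_j² ≥ (j - 1)⁻² ∑_{i=2}^j (i - 1)² ≥ (j - 1) / 3`. The summand is therefore at most
`9 / (j - 1)²`.
-/

section ERWCoefficients

variable {p : ℝ}

lemma aERW_pos (hp : 0 < p) (n : ℕ) : 0 < aERW p n := by
  unfold aERW
  split_ifs with hn
  · exact one_pos
  · have hn : (2 : ℝ) ≤ n := by exact_mod_cast not_le.mp hn
    exact div_pos (Real.Gamma_pos_of_pos (by linarith))
      (mul_pos (Real.Gamma_pos_of_pos (by linarith)) (Real.Gamma_pos_of_pos (by linarith)))

lemma natCast_mul_aERW_succ (hp : 0 < p) {n : ℕ} (hn : 1 ≤ n) :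
    (n : ℝ) * aERW p (n + 1) = (n + 2 * p - 1) * aERW p n := by
  have hΓ : Real.Gamma (2 * p) ≠ 0 := (Real.Gamma_pos_of_pos (by linarith)).ne'
  obtain rfl | hn := hn.eq_or_lt
  · simp only [aERW, Nat.reduceAdd, Nat.not_ofNat_le_one, le_refl, ↓reduceIte, Nat.cast_one,
      Nat.cast_ofNat, Real.Gamma_two, one_mul, mul_one, add_sub_cancel_left]
    rw [show (2 : ℝ) + (2 * p - 1) = 2 * p + 1 by ring, Real.Gamma_add_one (by positivity)]
    field_simp
  · have hn' : (2 : ℝ) ≤ n := by exact_mod_cast hn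
    have hΓn : Real.Gamma n ≠ 0 := (Real.Gamma_pos_of_pos (by positivity)).ne'
    simp only [aERW, if_neg (by omega : ¬n + 1 ≤ 1), if_neg (by omega : ¬n ≤ 1)]
    rw [show ((n + 1 : ℕ) : ℝ) + (2 * p - 1) = (n + (2 * p - 1)) + 1 by push_cast; ring,
      Nat.cast_succ, Real.Gamma_add_one (by linarith), Real.Gamma_add_one (by positivity)]
    field_simp
    ring

lemma monotone_natCast_sub_one_mul_aERW (hp : 0 < p) :
    Monotone fun n : ℕ => ((n : ℝ) - 1) * aERW p n := by
  refine monotone_nat_of_le_succ fun n => ?_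
  rcases Nat.eq_zero_or_pos n with rfl | hn
  · simp [aERW]
  · have h := natCast_mul_aERW_succ hp hn
    have ha := aERW_pos hp n
    push_cast
    nlinarith

end ERWCoefficients

lemma sub_one_pow_three_div_three_le_sum_Icc (j : ℕ) :
    ((j : ℝ) - 1) ^ 3 / 3 ≤ ∑ i ∈ Finset.Icc 2 j, ((i : ℝ) - 1) ^ 2 := by
  induction j with
  | zero => norm_num
  | succ j ih =>
    rcases Nat.eq_zero_or_pos j with rfl | hj
    · norm_num
    · rw [Finset.sum_Icc_succ_top (by omega)]
      have hj' : (1 : ℝ) ≤ j := by exact_mod_cast hj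
      push_cast
      nlinarith

lemma natCast_sub_one_div_three_le_aERW_sq_mul_sSqERW {p q : ℝ} (hp : 0 < p)
    (hq : 0 ≤ q * (1 - q)) (j : ℕ) :
    ((j : ℝ) - 1) / 3 ≤ aERW p j ^ 2 * sSqERW p q j := by
  have ha := aERW_pos hp j
  have hsum : ∑ i ∈ Finset.Icc 2 j, ((i : ℝ) - 1) ^ 2
      ≤ ((j : ℝ) - 1) ^ 2 * (aERW p j ^ 2 * ∑ i ∈ Finset.Icc 2 j, (aERW p i)⁻¹ ^ 2) := by
    rw [Finset.mul_sum, Finset.mul_sum]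
    refine Finset.sum_le_sum fun i hi => ?_
    obtain ⟨hi2, hij⟩ := Finset.mem_Icc.mp hi
    have hai := aERW_pos hp i
    have hmono := monotone_natCast_sub_one_mul_aERW hp hij
    have hi2' : (2 : ℝ) ≤ i := by exact_mod_cast hi2
    have hsq : (((i : ℝ) - 1) * aERW p i) ^ 2 ≤ (((j : ℝ) - 1) * aERW p j) ^ 2 :=
      pow_le_pow_left₀ (mul_nonneg (by linarith) hai.le) hmono 2
    calc ((i : ℝ) - 1) ^ 2 = (((i : ℝ) - 1) * aERW p i) ^ 2 * (aERW p i)⁻¹ ^ 2 := by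
          field_simp
      _ ≤ (((j : ℝ) - 1) * aERW p j) ^ 2 * (aERW p i)⁻¹ ^ 2 := by gcongr
      _ = _ := by ring
  have hs : aERW p j ^ 2 * ∑ i ∈ Finset.Icc 2 j, (aERW p i)⁻¹ ^ 2 ≤ aERW p j ^ 2 * sSqERW p q j := by
    unfold sSqERW
    gcongr
    linarith
  rcases le_or_gt j 1 with hj | hj
  · have hj' : (j : ℝ) ≤ 1 := by exact_mod_cast hj
    have : 0 ≤ aERW p j ^ 2 * ∑ i ∈ Finset.Icc 2 j, (aERW p i)⁻¹ ^ 2 := by positivity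
    linarith
  · have hj' : (0 : ℝ) < j - 1 := by
      have : (2 : ℝ) ≤ j := by exact_mod_cast hj
      linarith
    have h3 := (sub_one_pow_three_div_three_le_sum_Icc j).trans hsum
    rw [div_le_iff₀ three_pos]
    nlinarith [pow_pos hj' 2]

lemma one_div_aERW_pow_four_mul_sSqERW_sq_le {p q : ℝ} (hp : 0 < p) (hq : 0 ≤ q * (1 - q))
    (n : ℕ) :
    1 / (aERW p (n + 2) ^ 4 * sSqERW p q (n + 2) ^ 2) ≤ 9 * (1 / ((n + 1 : ℕ) : ℝ) ^ 2) := by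
  have h := natCast_sub_one_div_three_le_aERW_sq_mul_sSqERW hp hq (n + 2)
  calc 1 / (aERW p (n + 2) ^ 4 * sSqERW p q (n + 2) ^ 2)
      = 1 / (aERW p (n + 2) ^ 2 * sSqERW p q (n + 2)) ^ 2 := by ring
    _ ≤ 1 / (((n + 1 : ℕ) : ℝ) ^ 2 / 9) := by
      gcongr
      rw [show ((n + 1 : ℕ) : ℝ) ^ 2 / 9 = ((((n + 2 : ℕ) : ℝ) - 1) / 3) ^ 2 by push_cast; ring]
      have hn : (0 : ℝ) ≤ n := n.cast_nonneg
      exact pow_le_pow_left₀ (by push_cast; linarith) h 2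
    _ = 9 * (1 / ((n + 1 : ℕ) : ℝ) ^ 2) := by rw [one_div_div, mul_one_div]

theorem summable_inv_a_pow_four_mul_s_pow_four_general {p q : ℝ} (hp : p ∈ Set.Ioo (0 : ℝ) 1)
    (hq : q ∈ Set.Ioo (0 : ℝ) 1) :
    Summable (fun j : ℕ => 1 / (aERW p j ^ 4 * sSqERW p q j ^ 2)) := by
  have hq' : 0 ≤ q * (1 - q) := mul_nonneg hq.1.le (by linarith [hq.2])
  have hzeta : Summable fun n : ℕ => 9 * (1 / ((n + 1 : ℕ) : ℝ) ^ 2) :=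
    ((summable_nat_add_iff 1).mpr (Real.summable_one_div_nat_pow.mpr one_lt_two)).mul_left 9
  rw [← summable_nat_add_iff 2]
  exact hzeta.of_nonneg_of_le (fun n => by positivity)
    (one_div_aERW_pow_four_mul_sSqERW_sq_le hp.1 hq')

/-- `∑_j 1/(a_j^4 s_j^4) < ∞` for `p ≤ 3/4`. -/
theorem summable_inv_a_pow_four_mul_s_pow_four {p q : ℝ} (hp : p ∈ Set.Ioo (0 : ℝ) 1)
    (hp' : p ≤ 3 / 4) (hq : q ∈ Set.Ioo (0 : ℝ) 1) :
    Summable (fun j : ℕ => 1 / (aERW p j ^ 4 * sSqERW p q j ^ 2)) :=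
  summable_inv_a_pow_four_mul_s_pow_four_general hp hq
end
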